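/- Let X = {[b₁:c₁],...,[b_s:c_s]} ⊂ ℙ¹ be distinct points with all bᵢ ≠ 0 and a₁ ≤ ... ≤ a_s non-negative integers. Then the initial ideal of the power ideal J = ⟨(bᵢx + cᵢy)^{aᵢ+1}⟩ with respect to graded lexicographic order (x > y) is a lex-segment ideal: in each degree d it is spanned by the min{d+1, Σᵢ[d-aᵢ]₊} lex-largest monomials of degree d. -/

import Mathlib

/-!
Setting `y = 1` turns a homogeneous `f` of degree `d` into a polynomial of degree `≤ d` whose
degree is `d - B` exactly when `x^{d-B} y^B` is the lex-leading monomial of `f`, and turns the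
degree-`d` part of `J` into the space of sums `∑ rᵢ (X + μᵢ)^{aᵢ+1}` with `μᵢ = cᵢ / bᵢ` and
`deg rᵢ < d - aᵢ`. If `N = ∑ (d - aᵢ) ≤ d + 1`, such a sum of degree `< d + 1 - N` is zero:
pairing it apolarly against polynomials of degree `< N` with prescribed vanishing orders at the
`μᵢ` isolates the Taylor coefficients of each `rᵢ` at `-μᵢ` one at a time. So no degree below
`d + 1 - N` occurs. Conversely, after shrinking the `d - aᵢ` to total `B + 1`, a dimension count
(`B + 1` free coefficients, `B` conditions on the top coefficients) yields a sum of degree exactly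
`d - B` whenever `B < N`.
-/

open MvPolynomial

/-- The exponent vector of the monomial `x^A y^B` in `ℝ[x,y] = MvPolynomial (Fin 2) ℝ`,
with `x = X 0 > y = X 1`. -/
noncomputable def expVec (A B : ℕ) : Fin 2 →₀ ℕ := Finsupp.single 0 A + Finsupp.single 1 B

@[simp]
theorem expVec_apply_zero (A B : ℕ) : expVec A B 0 = A := by
  simp [expVec]

@[simp]
theorem expVec_apply_one (A B : ℕ) : expVec A B 1 = B := by
  simp [expVec]

open Finset Function
open scoped Nat Polynomial

theorem Nat.factorial_mul_factorial_mul_choose_eq {j t n : ℕ} (hjt : j ≤ t) (htn : t ≤ n) :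
    j ! * (n - j)! * t.choose j = t ! * (n - t)! * (n - j).choose (n - t) := by
  apply Nat.eq_of_mul_eq_mul_right (Nat.factorial_pos (t - j))
  have h₁ := Nat.choose_mul_factorial_mul_factorial hjt
  have h₂ := Nat.choose_mul_factorial_mul_factorial (Nat.sub_le_sub_left hjt n)
  rw [show n - j - (n - t) = t - j by omega] at h₂
  calc j ! * (n - j)! * t.choose j * (t - j)! = (n - j)! * (t.choose j * j ! * (t - j)!) := by ring
    _ = t ! * ((n - j).choose (n - t) * (n - t)! * (t - j)!) := by rw [h₁, h₂, mul_comm]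
    _ = _ := by ring

theorem Fintype.exists_le_sum_eq {ι : Type*} [Fintype ι] [DecidableEq ι] (m : ι → ℕ) {n : ℕ}
    (hn : n ≤ ∑ i, m i) : ∃ m' ≤ m, ∑ i, m' i = n := by
  induction n with
  | zero => exact ⟨0, fun i => Nat.zero_le _, by simp⟩
  | succ n ih =>
    obtain ⟨m', hm', hsum⟩ := ih (by omega)
    obtain ⟨i, hi⟩ : ∃ i, m' i < m i := by
      by_contra! h
      have := sum_le_sum fun i (_ : i ∈ univ) => h i
      omega
    refine ⟨m' + Pi.single i 1, fun j => ?_, by simp [sum_add_distrib, hsum]⟩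
    rcases eq_or_ne j i with rfl | hj
    · simpa using hi
    · simpa [hj] using hm' j

namespace Polynomial

section CommRing

variable {R : Type*} [CommRing R]

theorem coeff_taylor_eq_zero_of_X_sub_C_pow_dvd {μ : R} {e : ℕ} {P : R[X]}
    (h : (X - C μ) ^ e ∣ P) {l : ℕ} (hl : l < e) : (taylor μ P).coeff l = 0 := by
  obtain ⟨S, rfl⟩ := h
  rw [taylor_mul, taylor_pow, map_sub, taylor_X, taylor_C, add_sub_cancel_right]
  exact X_pow_dvd_iff.1 (dvd_mul_right _ _) l hl

theorem coeff_taylor_X_sub_C_pow_mul (μ : R) (e : ℕ) (S : R[X]) :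
    (taylor μ ((X - C μ) ^ e * S)).coeff e = S.eval μ := by
  rw [taylor_mul, taylor_pow, map_sub, taylor_X, taylor_C, add_sub_cancel_right,
    coeff_X_pow_mul', if_pos le_rfl, Nat.sub_self, taylor_coeff_zero]

theorem mul_X_add_C_pow_eq_sum {m : ℕ} {r : R[X]} (hr : r ∈ degreeLT R m) (μ : R) (e : ℕ) :
    r * (X + C μ) ^ e = ∑ k ∈ range m, C ((taylor (-μ) r).coeff k) * (X + C μ) ^ (e + k) := by
  rcases eq_or_ne r 0 with rfl | hr₀
  · simp
  have hdeg : (taylor (-μ) r).natDegree < m := by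
    rwa [natDegree_taylor, natDegree_lt_iff_degree_lt hr₀, ← mem_degreeLT]
  conv_lhs => rw [← taylor_zero r, ← add_neg_cancel μ, ← taylor_taylor,
    as_sum_range' _ _ hdeg]
  simp only [map_sum, taylor_monomial, sum_mul, pow_add]
  exact sum_congr rfl fun k _ => by ring

/-- Up to a factor `n !`, the apolarity pairing of the binary forms of degree `n` homogenizing
`f` and `P`. -/
noncomputable def apolarPairing (n : ℕ) (P : R[X]) : R[X] →ₗ[R] R :=
  ∑ j ∈ range (n + 1), ((j ! * (n - j)! : R) * P.coeff (n - j)) • lcoeff R j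

theorem apolarPairing_apply (n : ℕ) (P f : R[X]) :
    apolarPairing n P f =
      ∑ j ∈ range (n + 1), (j ! * (n - j)! : R) * P.coeff (n - j) * f.coeff j := by
  simp [apolarPairing, mul_assoc]

theorem apolarPairing_X_add_C_pow {n t : ℕ} (htn : t ≤ n) {P : R[X]} (hP : P.natDegree ≤ n)
    (μ : R) : apolarPairing n P ((X + C μ) ^ t) = t ! * (n - t)! * (taylor μ P).coeff (n - t) := by
  have hD : (hasseDeriv (n - t) P).natDegree < t + 1 := by
    have := natDegree_hasseDeriv_le P (n - t)
    omega
  rw [apolarPairing_apply, taylor_coeff, eval_eq_sum_range' hD]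
  conv_rhs => rw [← sum_range_reflect, mul_sum]
  rw [← sum_subset (range_subset_range.2 (by omega : t + 1 ≤ n + 1))]
  · refine sum_congr rfl fun j hj => ?_
    have hjt : j ≤ t := Nat.lt_succ_iff.1 (mem_range.1 hj)
    have key := congrArg (Nat.cast : ℕ → R) (Nat.factorial_mul_factorial_mul_choose_eq hjt htn)
    push_cast at key
    rw [coeff_X_add_C_pow, hasseDeriv_coeff, show t + 1 - 1 - j + (n - t) = n - j by omega,
      show t + 1 - 1 - j = t - j by omega]
    linear_combination (P.coeff (n - j) * μ ^ (t - j)) * key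
  · intro j _ hj
    simp only [mem_range, not_lt] at hj
    rw [coeff_X_add_C_pow, Nat.choose_eq_zero_of_lt (by omega)]
    simp

theorem apolarPairing_eq_zero {n M : ℕ} {P f : R[X]} (hP : P.natDegree + M ≤ n)
    (hf : ∀ j, M ≤ j → f.coeff j = 0) : apolarPairing n P f = 0 := by
  rw [apolarPairing_apply]
  refine sum_eq_zero fun j hj => ?_
  rcases lt_or_ge j M with hjM | hjM
  · rw [coeff_eq_zero_of_natDegree_lt (by have := mem_range.1 hj; omega)]
    simp
  · simp [hf j hjM]

theorem apolarPairing_mul_X_add_C_pow {d a : ℕ} {r P : R[X]} (hr : r ∈ degreeLT R (d - a))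
    (hP : P.natDegree ≤ d) (μ : R) :
    apolarPairing d P (r * (X + C μ) ^ (a + 1)) =
      ∑ k ∈ range (d - a), (taylor (-μ) r).coeff k * ((a + 1 + k)! * (d - a - 1 - k)! : R) *
        (taylor μ P).coeff (d - a - 1 - k) := by
  rw [mul_X_add_C_pow_eq_sum hr, map_sum]
  refine sum_congr rfl fun k hk => ?_
  have hk := mem_range.1 hk
  rw [← smul_eq_C_mul, map_smul, apolarPairing_X_add_C_pow (by omega) hP, smul_eq_mul,
    show d - (a + 1 + k) = d - a - 1 - k by omega]
  ring

end CommRing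

section Field

variable {K : Type*} [Field K] {ι : Type*} [Fintype ι]

theorem natDegree_mul_X_add_C_pow_le {d a : ℕ} {r : K[X]} (hr : r ∈ degreeLT K (d - a))
    (μ : K) : (r * (X + C μ) ^ (a + 1)).natDegree ≤ d := by
  rcases eq_or_ne r 0 with rfl | hr₀
  · simp
  have := (natDegree_lt_iff_degree_lt hr₀).2 (mem_degreeLT.1 hr)
  refine natDegree_mul_le.trans ?_
  rw [natDegree_pow_X_add_C]
  omega

theorem mul_X_add_C_pow_mem_degreeLT {m : ℕ} {r : K[X]} (hr : r ∈ degreeLT K m) (μ : K) (e : ℕ) :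
    r * (X + C μ) ^ e ∈ degreeLT K (m + e) := by
  rcases eq_or_ne r 0 with rfl | hr₀
  · simp
  have := (natDegree_lt_iff_degree_lt hr₀).2 (mem_degreeLT.1 hr)
  have hpow := pow_ne_zero e (X_add_C_ne_zero μ)
  rw [mem_degreeLT, ← natDegree_lt_iff_degree_lt (mul_ne_zero hr₀ hpow), natDegree_mul hr₀ hpow,
    natDegree_pow_X_add_C]
  omega

theorem exists_natDegree_le_vanishing_orders [DecidableEq ι] {μ : ι → K} (hμ : Injective μ)
    (m : ι → ℕ) (i₀ : ι) (j : ℕ) :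
    ∃ P : K[X], P.natDegree ≤ j + ∑ i ∈ univ.erase i₀, m i ∧
      (∀ i ≠ i₀, ∀ l < m i, (taylor (μ i) P).coeff l = 0) ∧
      (∀ l < j, (taylor (μ i₀) P).coeff l = 0) ∧ (taylor (μ i₀) P).coeff j ≠ 0 := by
  refine ⟨(X - C (μ i₀)) ^ j * ∏ i ∈ univ.erase i₀, (X - C (μ i)) ^ m i, ?_,
    fun i hi l hl => ?_, fun l hl => ?_, ?_⟩
  · refine natDegree_mul_le.trans (add_le_add (natDegree_pow_le.trans ?_) ?_)
    · simp
    · refine (natDegree_prod_le _ _).trans (sum_le_sum fun i _ => natDegree_pow_le.trans ?_)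
      simp
  · refine coeff_taylor_eq_zero_of_X_sub_C_pow_dvd (Dvd.dvd.mul_left ?_ _) hl
    exact dvd_prod_of_mem _ (mem_erase.2 ⟨hi, mem_univ _⟩)
  · exact coeff_taylor_eq_zero_of_X_sub_C_pow_dvd (dvd_mul_right _ _) hl
  · rw [coeff_taylor_X_sub_C_pow_mul, eval_prod]
    refine prod_ne_zero_iff.2 fun i hi => ?_
    rw [eval_pow, eval_sub, eval_X, eval_C]
    exact pow_ne_zero _ (sub_ne_zero.2 (hμ.ne (mem_erase.1 hi).1.symm))

variable [CharZero K]

theorem eq_zero_of_coeff_sum_mul_X_add_C_pow_eq_zero {μ : ι → K} (hμ : Injective μ)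
    {a : ι → ℕ} {d : ℕ} (hN : ∑ i, (d - a i) ≤ d + 1) {r : ι → K[X]}
    (hr : ∀ i, r i ∈ degreeLT K (d - a i))
    (hG : ∀ t, d + 1 - ∑ i, (d - a i) ≤ t →
      (∑ i, r i * (X + C (μ i)) ^ (a i + 1)).coeff t = 0) :
    r = 0 := by
  classical
  -- The sum pairs to zero with every `P` of degree `< N`. Taking `P` to vanish to order `d - a i`
  -- at `μ i` for `i ≠ i₀` and to order exactly `d - a i₀ - 1 - k` at `μ i₀` leaves only the
  -- `k`-th Taylor coefficient of `r i₀` at `-μ i₀`, once the lower ones are known to vanish.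
  have hpair : ∀ P : K[X], P.natDegree < ∑ i, (d - a i) →
      ∑ i, ∑ k ∈ range (d - a i), (taylor (-μ i) (r i)).coeff k *
        ((a i + 1 + k)! * (d - a i - 1 - k)! : K) * (taylor (μ i) P).coeff (d - a i - 1 - k) =
        0 := by
    intro P hP
    rw [← apolarPairing_eq_zero (n := d) (P := P) (by omega) hG, map_sum]
    exact sum_congr rfl fun i _ => (apolarPairing_mul_X_add_C_pow (hr i) (by omega) _).symm
  funext i₀
  suffices ∀ k, (taylor (-μ i₀) (r i₀)).coeff k = 0 from
    (taylor_eq_zero _ _).1 (Polynomial.ext this)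
  intro k
  induction k using Nat.strong_induction_on with
  | _ k ih =>
  rcases le_or_gt (d - a i₀) k with hk | hk
  · exact coeff_eq_zero_of_degree_lt
      ((degree_taylor _ _).trans_lt ((mem_degreeLT.1 (hr i₀)).trans_le (by exact_mod_cast hk)))
  obtain ⟨P, hPdeg, hPi, hPlt, hPj⟩ :=
    exists_natDegree_le_vanishing_orders hμ (fun i => d - a i) i₀ (d - a i₀ - 1 - k)
  have hsum := hpair P (by rw [← sum_erase_add _ _ (mem_univ i₀)]; omega)
  rw [sum_eq_single i₀ (fun i _ hi => sum_eq_zero fun k' hk' => by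
      rw [hPi i hi _ (by have := mem_range.1 hk'; omega), mul_zero]) (by simp),
    sum_eq_single k (fun k' hk' hne => ?_) (by simp [hk])] at hsum
  · have hfac : ((a i₀ + 1 + k)! * (d - a i₀ - 1 - k)! : K) ≠ 0 :=
      mul_ne_zero (Nat.cast_ne_zero.2 (Nat.factorial_ne_zero _))
        (Nat.cast_ne_zero.2 (Nat.factorial_ne_zero _))
    simpa [hfac, hPj] using hsum
  · rcases lt_or_gt_of_ne hne with hlt | hgt
    · rw [ih k' hlt, zero_mul, zero_mul]
    · rw [hPlt _ (by have := mem_range.1 hk'; omega), mul_zero]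

theorem sub_sum_le_natDegree_sum_mul_X_add_C_pow {μ : ι → K} (hμ : Injective μ) {a : ι → ℕ}
    {d : ℕ} {r : ι → K[X]} (hr : ∀ i, r i ∈ degreeLT K (d - a i))
    (hG : ∑ i, r i * (X + C (μ i)) ^ (a i + 1) ≠ 0) :
    d + 1 - ∑ i, (d - a i) ≤ (∑ i, r i * (X + C (μ i)) ^ (a i + 1)).natDegree := by
  by_contra! hlt
  refine hG ?_
  rw [eq_zero_of_coeff_sum_mul_X_add_C_pow_eq_zero hμ (by omega) hr
    fun t ht => coeff_eq_zero_of_natDegree_lt (by omega)]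
  simp

theorem exists_degree_sum_mul_X_add_C_pow_eq_of_sum_eq {μ : ι → K} (hμ : Injective μ)
    {a : ι → ℕ} {d B : ℕ} (hB : B ≤ d) (hN : ∑ i, (d - a i) = B + 1) :
    ∃ r : ι → K[X], (∀ i, r i ∈ degreeLT K (d - a i)) ∧
      (∑ i, r i * (X + C (μ i)) ^ (a i + 1)).degree = ↑(d - B) := by
  have (n : ℕ) : Module.Finite K (degreeLT K n) := Module.Finite.equiv (degreeLTEquiv K n).symm
  let Φ : (∀ i, degreeLT K (d - a i)) →ₗ[K] K[X] := ∑ i,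
    LinearMap.mulRight K ((X + C (μ i)) ^ (a i + 1)) ∘ₗ (degreeLT K (d - a i)).subtype ∘ₗ
      LinearMap.proj i
  have hΦ (r) : Φ r = ∑ i, (r i : K[X]) * (X + C (μ i)) ^ (a i + 1) := by simp [Φ]
  -- the `B` coefficients above `d - B` are `B` linear conditions on a space of dimension `B + 1`
  let Ψ : (∀ i, degreeLT K (d - a i)) →ₗ[K] (Fin B → K) :=
    LinearMap.pi fun j => lcoeff K (d - j) ∘ₗ Φ
  have hdim : Module.finrank K (Fin B → K) < Module.finrank K (∀ i, degreeLT K (d - a i)) := by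
    simp [Module.finrank_pi_fintype, (degreeLTEquiv K _).finrank_eq, hN]
  obtain ⟨r, hrΨ, hr₀⟩ := Submodule.exists_mem_ne_zero_of_ne_bot
    (LinearMap.ker_ne_bot_of_finrank_lt hdim)
  refine ⟨fun i => r i, fun i => (r i).2, ?_⟩
  have htop : ∀ t, d - B < t → (Φ r).coeff t = 0 := by
    intro t ht
    rcases le_or_gt t d with htd | htd
    · have h := congrFun (LinearMap.mem_ker.1 hrΨ : Ψ r = 0) ⟨d - t, by omega⟩
      simpa [Ψ, show d - (d - t) = t by omega] using h
    · rw [hΦ]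
      exact coeff_eq_zero_of_natDegree_lt ((natDegree_sum_le_of_forall_le _ _ fun i _ =>
        natDegree_mul_X_add_C_pow_le (r i).2 _).trans_lt htd)
  have hcoeff : (Φ r).coeff (d - B) ≠ 0 := by
    intro h₀
    have hr := eq_zero_of_coeff_sum_mul_X_add_C_pow_eq_zero hμ (by omega) (fun i => (r i).2)
      fun t ht => ?_
    · apply hr₀
      ext i : 1
      exact Subtype.ext (congrFun hr i)
    rw [← hΦ]
    rcases eq_or_lt_of_le (show d - B ≤ t by omega) with rfl | h
    exacts [h₀, htop t h]
  rw [← hΦ]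
  exact degree_eq_of_le_of_coeff_ne_zero
    ((degree_le_iff_coeff_zero _ _).2 fun t ht => htop t (by exact_mod_cast ht)) hcoeff

theorem exists_degree_sum_mul_X_add_C_pow_eq {μ : ι → K} (hμ : Injective μ) {a : ι → ℕ}
    {d B : ℕ} (hB : B ≤ d) (hBN : B < ∑ i, (d - a i)) :
    ∃ r : ι → K[X], (∀ i, r i ∈ degreeLT K (d - a i)) ∧
      (∑ i, r i * (X + C (μ i)) ^ (a i + 1)).degree = ↑(d - B) := by
  classical
  -- raise the exponents `a i` until exactly `B + 1` coefficients remain free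
  obtain ⟨m, hle, hmsum⟩ := Fintype.exists_le_sum_eq (fun i => d - a i) hBN
  have hm (i : ι) : m i ≤ d - a i := hle i
  have hm' (i : ι) : d - (a i + (d - a i - m i)) = m i := by have := hm i; omega
  obtain ⟨r, hr, hdeg⟩ := exists_degree_sum_mul_X_add_C_pow_eq_of_sum_eq hμ
    (a := fun i => a i + (d - a i - m i)) hB (by simp only [hm', hmsum])
  refine ⟨fun i => r i * (X + C (μ i)) ^ (d - a i - m i), fun i => ?_, ?_⟩
  · have := mul_X_add_C_pow_mem_degreeLT (hm' i ▸ hr i) (μ i) (d - a i - m i)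
    rwa [show m i + (d - a i - m i) = d - a i by have := hm i; omega] at this
  · refine (congrArg degree (sum_congr rfl fun i _ => ?_)).trans hdeg
    ring

theorem exists_degree_sum_mul_X_add_C_pow_eq_iff {μ : ι → K} (hμ : Injective μ) {a : ι → ℕ}
    {d B : ℕ} (hB : B ≤ d) :
    (∃ r : ι → K[X], (∀ i, r i ∈ degreeLT K (d - a i)) ∧
      (∑ i, r i * (X + C (μ i)) ^ (a i + 1)).degree = ↑(d - B)) ↔ B < ∑ i, (d - a i) := by
  refine ⟨fun ⟨r, hr, hdeg⟩ => ?_, exists_degree_sum_mul_X_add_C_pow_eq hμ hB⟩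
  have := sub_sum_le_natDegree_sum_mul_X_add_C_pow hμ hr fun h => by simp [h] at hdeg
  rw [natDegree_eq_of_degree_eq_some hdeg] at this
  omega

end Field

end Polynomial

namespace MvPolynomial

theorem homogeneousComponent_mul_of_isHomogeneous {σ R : Type*} [CommSemiring R]
    {g : MvPolynomial σ R} {e : ℕ} (hg : g.IsHomogeneous e) (h : MvPolynomial σ R) (n : ℕ) :
    homogeneousComponent n (h * g) = if e ≤ n then homogeneousComponent (n - e) h * g else 0 := by
  induction h using MvPolynomial.induction_on' with
  | monomial u c =>
    rw [homogeneousComponent_of_mem ((isHomogeneous_monomial c rfl).mul hg),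
      homogeneousComponent_of_mem (isHomogeneous_monomial c rfl)]
    split_ifs <;> first | rfl | (exfalso; omega)
  | add p q hp hq =>
    rw [add_mul, map_add, hp, hq, map_add, add_mul]
    split_ifs <;> simp

section Fin2

variable {R : Type*} [CommSemiring R]

noncomputable abbrev dehomogenize : MvPolynomial (Fin 2) R →ₐ[R] R[X] :=
  aeval ![Polynomial.X, 1]

theorem natDegree_dehomogenize_le {f : MvPolynomial (Fin 2) R} {d : ℕ}
    (hf : f.IsHomogeneous d) : (dehomogenize f).natDegree ≤ d := by
  rw [f.as_sum, map_sum]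
  refine Polynomial.natDegree_sum_le_of_forall_le _ _ fun v hv => ?_
  have := hf (mem_support_iff.1 hv)
  have hv0 : v 0 ≤ d := this ▸ Finsupp.le_weight 1 one_ne_zero v
  simpa [aeval_monomial, Finsupp.prod_fintype, Fin.prod_univ_two, Polynomial.algebraMap_eq]
    using (Polynomial.natDegree_C_mul_X_pow_le _ _).trans hv0

theorem coeff_expVec_eq_coeff_dehomogenize {f : MvPolynomial (Fin 2) R} {d t : ℕ}
    (hf : f.IsHomogeneous d) (ht : t ≤ d) :
    coeff (expVec t (d - t)) f = (dehomogenize f).coeff t := by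
  conv_lhs => rw [← Polynomial.homogenize_eq_of_isHomogeneous hf rfl]
  rw [Polynomial.coeff_homogenize, expVec_apply_zero, expVec_apply_one, if_pos (by omega)]

theorem lex_leading_iff_degree_dehomogenize {f : MvPolynomial (Fin 2) R} {d B : ℕ}
    (hf : f.IsHomogeneous d) (hB : B ≤ d) :
    (coeff (expVec (d - B) B) f ≠ 0 ∧ ∀ B' < B, coeff (expVec (d - B') B') f = 0) ↔
      (dehomogenize f).degree = ↑(d - B) := by
  have hcoeff (B' : ℕ) (hB' : B' ≤ d) :
      coeff (expVec (d - B') B') f = (dehomogenize f).coeff (d - B') := by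
    simpa [Nat.sub_sub_self hB'] using coeff_expVec_eq_coeff_dehomogenize hf (Nat.sub_le d B')
  constructor
  · rintro ⟨hlead, hhigher⟩
    refine Polynomial.degree_eq_of_le_of_coeff_ne_zero
      ((Polynomial.degree_le_iff_coeff_zero _ _).2 fun t ht => ?_) (hcoeff B hB ▸ hlead)
    have ht : d - B < t := by exact_mod_cast ht
    rcases le_or_gt t d with htd | htd
    · have := hhigher (d - t) (by omega)
      rwa [hcoeff (d - t) (by omega), Nat.sub_sub_self htd] at this
    · exact Polynomial.coeff_eq_zero_of_natDegree_lt ((natDegree_dehomogenize_le hf).trans_lt htd)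
  · intro hdeg
    refine ⟨hcoeff B hB ▸ Polynomial.coeff_ne_zero_of_eq_degree hdeg, fun B' hB' => ?_⟩
    rw [hcoeff B' (by omega)]
    exact Polynomial.coeff_eq_zero_of_degree_lt
      (hdeg ▸ by exact_mod_cast (by omega : d - B < d - B'))

theorem isHomogeneous_linearForm_pow (b c : R) (n : ℕ) :
    ((C b * X 0 + C c * X 1 : MvPolynomial (Fin 2) R) ^ n).IsHomogeneous n := by
  simpa using ((isHomogeneous_C_mul_X b 0).add (isHomogeneous_C_mul_X c 1)).pow n

end Fin2

section LinearForm

variable {K : Type*} [Field K]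

theorem dehomogenize_linearForm {b : K} (hb : b ≠ 0) (c : K) :
    dehomogenize (C b * X 0 + C c * X 1) =
      Polynomial.C b * (Polynomial.X + Polynomial.C (c / b)) := by
  simp [mul_add, ← Polynomial.C_mul, mul_div_cancel₀ c hb]

theorem exists_dehomogenize_homogeneousComponent_mul_linearForm_pow {b : K} (hb : b ≠ 0) (c : K)
    (h : MvPolynomial (Fin 2) K) (d a : ℕ) :
    ∃ r ∈ Polynomial.degreeLT K (d - a),
      dehomogenize (homogeneousComponent d (h * (C b * X 0 + C c * X 1) ^ (a + 1))) =
        r * (Polynomial.X + Polynomial.C (c / b)) ^ (a + 1) := by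
  rw [homogeneousComponent_mul_of_isHomogeneous (isHomogeneous_linearForm_pow b c (a + 1))]
  split_ifs with had
  · refine ⟨Polynomial.C (b ^ (a + 1)) * dehomogenize (homogeneousComponent (d - (a + 1)) h),
      Polynomial.mem_degreeLT.2 (Polynomial.degree_le_natDegree.trans_lt ?_), ?_⟩
    · have := natDegree_dehomogenize_le (homogeneousComponent_isHomogeneous (d - (a + 1)) h)
      exact_mod_cast ((Polynomial.natDegree_C_mul_le _ _).trans this).trans_lt (by omega)
    · rw [map_mul, map_pow, dehomogenize_linearForm hb, mul_pow, Polynomial.C_pow]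
      ring
  · exact ⟨0, zero_mem _, by simp⟩

theorem exists_isHomogeneous_dehomogenize_mul_linearForm_pow_eq {b : K} (hb : b ≠ 0) (c : K)
    {d a : ℕ} {r : K[X]} (hr : r ∈ Polynomial.degreeLT K (d - a)) :
    ∃ h : MvPolynomial (Fin 2) K, (h * (C b * X 0 + C c * X 1) ^ (a + 1)).IsHomogeneous d ∧
      dehomogenize (h * (C b * X 0 + C c * X 1) ^ (a + 1)) =
        r * (Polynomial.X + Polynomial.C (c / b)) ^ (a + 1) := by
  rcases eq_or_ne r 0 with rfl | hr₀
  · exact ⟨0, by simpa using isHomogeneous_zero _ _ d, by simp⟩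
  have hr' := (Polynomial.natDegree_lt_iff_degree_lt hr₀).2 (Polynomial.mem_degreeLT.1 hr)
  refine ⟨(Polynomial.C (b ^ (a + 1))⁻¹ * r).homogenize (d - (a + 1)), ?_, ?_⟩
  · convert (Polynomial.isHomogeneous_homogenize _).mul (isHomogeneous_linearForm_pow b c (a + 1))
      using 1
    omega
  · have hβ : Polynomial.C (b ^ (a + 1))⁻¹ * Polynomial.C (b ^ (a + 1)) = 1 := by
      rw [← Polynomial.C_mul, inv_mul_cancel₀ (pow_ne_zero _ hb), Polynomial.C_1]
    rw [map_mul, map_pow, Polynomial.aeval_homogenize_X_one _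
      ((Polynomial.natDegree_C_mul_le _ _).trans (by omega)), dehomogenize_linearForm hb, mul_pow,
      ← Polynomial.C_pow]
    linear_combination (r * (Polynomial.X + Polynomial.C (c / b)) ^ (a + 1)) * hβ

end LinearForm

section PowerIdeal

variable {K : Type*} [Field K] {ι : Type*} [Fintype ι] {a : ι → ℕ} {b c : ι → K} {d : ℕ}

theorem exists_dehomogenize_eq_sum_of_mem_span (hb : ∀ i, b i ≠ 0) {f : MvPolynomial (Fin 2) K}
    (hf : f ∈ Ideal.span (Set.range fun i => (C (b i) * X 0 + C (c i) * X 1) ^ (a i + 1)))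
    (hhom : f.IsHomogeneous d) :
    ∃ r : ι → K[X], (∀ i, r i ∈ Polynomial.degreeLT K (d - a i)) ∧
      dehomogenize f = ∑ i, r i * (Polynomial.X + Polynomial.C (c i / b i)) ^ (a i + 1) := by
  obtain ⟨h, rfl⟩ := Ideal.mem_span_range_iff_exists_fun.1 hf
  choose r hr hrh using fun i =>
    exists_dehomogenize_homogeneousComponent_mul_linearForm_pow (hb i) (c i) (h i) d (a i)
  refine ⟨r, hr, ?_⟩
  rw [← homogeneousComponent_eq_self hhom, map_sum, map_sum]
  exact Finset.sum_congr rfl fun i _ => hrh i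

theorem exists_mem_span_dehomogenize_eq_sum (hb : ∀ i, b i ≠ 0) {r : ι → K[X]}
    (hr : ∀ i, r i ∈ Polynomial.degreeLT K (d - a i)) :
    ∃ f ∈ Ideal.span (Set.range fun i => (C (b i) * X 0 + C (c i) * X 1) ^ (a i + 1)),
      f.IsHomogeneous d ∧
        dehomogenize f = ∑ i, r i * (Polynomial.X + Polynomial.C (c i / b i)) ^ (a i + 1) := by
  choose h hhom hh using fun i =>
    exists_isHomogeneous_dehomogenize_mul_linearForm_pow_eq (hb i) (c i) (hr i)
  refine ⟨∑ i, h i * (C (b i) * X 0 + C (c i) * X 1) ^ (a i + 1),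
    Ideal.mem_span_range_iff_exists_fun.2 ⟨h, rfl⟩, IsHomogeneous.sum _ _ _ fun i _ => hhom i, ?_⟩
  rw [map_sum]
  exact Finset.sum_congr rfl fun i _ => hh i

end PowerIdeal

end MvPolynomial

/-- A monomial `x^{d-B} y^B` lies in the initial ideal in degree `d` iff it is the lex-leading
monomial of some homogeneous `f ∈ J` of degree `d`; for homogeneous `f` of degree `d`,
this means `coeff (d-B, B) f ≠ 0` and `coeff (d-B', B') f = 0` for all `B' < B`. -/
theorem power_ideal_initial_lex_segment_general (s : ℕ) (b c : Fin s → ℝ)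
    (hb : ∀ i, b i ≠ 0)
    (hdist : ∀ i j, i ≠ j → b i * c j ≠ b j * c i)
    (a : Fin s → ℕ) (d B : ℕ) (hBd : B ≤ d) :
    (∃ f ∈ Ideal.span {f : MvPolynomial (Fin 2) ℝ |
          ∃ i, f = (C (b i) * X 0 + C (c i) * X 1) ^ (a i + 1)},
        f.IsHomogeneous d ∧ coeff (expVec (d - B) B) f ≠ 0 ∧
          ∀ B' < B, coeff (expVec (d - B') B') f = 0) ↔
      B < min (d + 1) (∑ i, (d - a i)) := by
  have hμ : Injective fun i => c i / b i := fun i j hij => by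
    by_contra hne
    rw [div_eq_div_iff (hb i) (hb j)] at hij
    exact hdist j i (Ne.symm hne) (by linarith)
  have hgens :
      {f : MvPolynomial (Fin 2) ℝ | ∃ i, f = (C (b i) * X 0 + C (c i) * X 1) ^ (a i + 1)} =
        Set.range fun i => (C (b i) * X 0 + C (c i) * X 1) ^ (a i + 1) := by
    ext
    simp [eq_comm]
  rw [hgens, lt_min_iff, ← Polynomial.exists_degree_sum_mul_X_add_C_pow_eq_iff hμ hBd]
  constructor
  · rintro ⟨f, hfJ, hf, hlead⟩
    obtain ⟨r, hr, hfr⟩ := exists_dehomogenize_eq_sum_of_mem_span hb hfJ hf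
    exact ⟨by omega, r, hr, hfr ▸ (lex_leading_iff_degree_dehomogenize hf hBd).1 hlead⟩
  · rintro ⟨-, r, hr, hdeg⟩
    obtain ⟨f, hfJ, hf, hfr⟩ := exists_mem_span_dehomogenize_eq_sum hb hr
    exact ⟨f, hfJ, hf, (lex_leading_iff_degree_dehomogenize hf hBd).2 (hfr ▸ hdeg)⟩

/-- Corollary `LexSeg1D`: the initial ideal of the power ideal
`J = ⟨(bᵢx + cᵢy)^{aᵢ+1}⟩` of distinct points with nonvanishing `x`-coordinates, with
respect to graded lex order (`x > y`), is a lex-segment ideal: in each degree `d` its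
monomials are exactly the `min(d+1, Σᵢ[d-aᵢ]₊)` lex-largest monomials of degree `d`.
A monomial `x^{d-B} y^B` lies in the initial ideal in degree `d` iff it is the lex-leading
monomial of some homogeneous `f ∈ J` of degree `d`; for homogeneous `f` of degree `d`,
this means `coeff (d-B, B) f ≠ 0` and `coeff (d-B', B') f = 0` for all `B' < B`. -/
theorem power_ideal_initial_lex_segment (s : ℕ) (b c : Fin s → ℝ)
    (hb : ∀ i, b i ≠ 0)
    (hdist : ∀ i j, i ≠ j → b i * c j ≠ b j * c i)
    (a : Fin s → ℕ) (hmono : Monotone a) (d B : ℕ) (hBd : B ≤ d) :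
    (∃ f ∈ Ideal.span {f : MvPolynomial (Fin 2) ℝ |
          ∃ i, f = (C (b i) * X 0 + C (c i) * X 1) ^ (a i + 1)},
        f.IsHomogeneous d ∧ coeff (expVec (d - B) B) f ≠ 0 ∧
          ∀ B' < B, coeff (expVec (d - B') B') f = 0) ↔
      B < min (d + 1) (∑ i, (d - a i)) :=
  power_ideal_initial_lex_segment_general s b c hb hdist a d B hBd
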